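/- Suppose all points of S = R ∪ B ∪ P lie on a common line. Then for every edge uv of a minimum red-blue-purple spanning graph of (R,B,P), no purple point of P lies in the open segment between u and v. Equivalently, every edge has both of its endpoints in the same block S_j of the partition of the line into the region left of the leftmost purple point, the regions between consecutive purple points, and the region right of the rightmost purple point (each block including its delimiting purple points). -/

import Mathlib

/-!
Let `p ∈ P` lie strictly inside the edge `uv`, so `dist u p + dist p v = dist u v` with both
summands positive; we build a strictly lighter RBP graph. If `uv` lies in neither the red-purple
nor the blue-purple graph, drop it. Otherwise say `u, v ∈ R ∪ P`; after removing `uv`, `p` is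
still joined to one endpoint, say `v`, in the red-purple graph. If `p` is also joined to `v` in
the blue-purple graph (or `uv` is not an edge there), replace `uv` by the shorter edge `up`.
If not, replace `uv` by `up` and `pv`, which costs nothing; the red-purple path from `p` to `v`
must then pass through a vertex `w ∉ B ∪ P`, and an edge of the path at `w` lies on a red-purple
cycle and is not a blue-purple edge, so it can be deleted.
-/

open scoped Classical

noncomputable section

/-- The Euclidean plane. -/
abbrev Pt : Type := EuclideanSpace ℝ (Fin 2)

/-- The simple graph on the plane whose edge set is the finite set `E`. -/
def graphOf (E : Finset (Sym2 Pt)) : SimpleGraph Pt where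
  Adj x y := x ≠ y ∧ s(x, y) ∈ E
  symm := ⟨fun x y ⟨hne, he⟩ => ⟨hne.symm, by rwa [Sym2.eq_swap]⟩⟩
  loopless := ⟨fun x ⟨hne, _⟩ => hne rfl⟩

/-- Euclidean length of an edge. -/
def edgeLen (e : Sym2 Pt) : ℝ :=
  Sym2.lift ⟨fun x y => dist x y, fun _ _ => dist_comm _ _⟩ e

/-- Total Euclidean length of a finite edge set. -/
def weight (E : Finset (Sym2 Pt)) : ℝ := ∑ e ∈ E, edgeLen e

/-- `E` is the edge set of a red-blue-purple spanning graph of `(R, B, P)`. -/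
def IsRBP (R B P : Finset Pt) (E : Finset (Sym2 Pt)) : Prop :=
  (∀ e ∈ E, ¬ e.IsDiag) ∧
  (∀ e ∈ E, ∀ x ∈ e, x ∈ R ∪ B ∪ P) ∧
  ((graphOf E).induce (↑(R ∪ P) : Set Pt)).Connected ∧
  ((graphOf E).induce (↑(B ∪ P) : Set Pt)).Connected

/-- `E` is the edge set of a minimum red-blue-purple spanning graph of `(R, B, P)`. -/
def IsMinRBP (R B P : Finset Pt) (E : Finset (Sym2 Pt)) : Prop :=
  IsRBP R B P E ∧ ∀ E', IsRBP R B P E' → weight E ≤ weight E'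

namespace SimpleGraph

variable {V : Type*} {G H : SimpleGraph V}

lemma Connected.of_forall_adj_reachable (hG : G.Connected)
    (h : ∀ ⦃a b⦄, G.Adj a b → H.Reachable a b) : H.Connected := by
  have := hG.nonempty
  refine ⟨fun x y => ?_⟩
  have hxy := hG.preconnected x y
  rw [reachable_eq_reflTransGen] at hxy ⊢
  exact hxy.lift' id fun a b hab => reachable_eq_reflTransGen ▸ h hab

lemma Reachable.reachable_deleteEdges_or {x u : V} (h : G.Reachable x u) (v : V) :
    (G.deleteEdges {s(u, v)}).Reachable x u ∨ (G.deleteEdges {s(u, v)}).Reachable x v := by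
  obtain ⟨W⟩ := h
  induction W with
  | nil => exact .inl .rfl
  | @cons a b c hadj _ ih =>
    by_cases hab : s(a, b) = s(c, v)
    · rcases Sym2.eq_iff.1 hab with ⟨ha, -⟩ | ⟨ha, -⟩
      exacts [.inl (ha ▸ .rfl), .inr (ha ▸ .rfl)]
    · have hadj' : (G.deleteEdges {s(c, v)}).Adj a b := deleteEdges_adj.2 ⟨hadj, hab⟩
      exact ih.imp hadj'.reachable.trans hadj'.reachable.trans

lemma Walk.IsPath.exists_adj_reachable_deleteEdges {a b w : V} {W : G.Walk a b}
    (hW : W.IsPath) (hw : w ∈ W.support) (hwb : w ≠ b) :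
    ∃ w', G.Adj w w' ∧ (G.deleteEdges {s(w, w')}).Reachable a w ∧
      (G.deleteEdges {s(w, w')}).Reachable w' b := by
  classical
  obtain ⟨w', hadj, W₂, hW₂⟩ := Walk.exists_eq_cons_of_ne hwb (W.dropUntil w hw)
  have hdisj := hW.isTrail.disjoint_edges_takeUntil_dropUntil hw
  have hdrop : (Walk.cons hadj W₂).IsPath := hW₂ ▸ hW.dropUntil hw
  refine ⟨w', hadj, ((W.takeUntil w hw).toDeleteEdge _ fun h => ?_).reachable,
    (W₂.toDeleteEdge _ fun h => ?_).reachable⟩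
  · exact hdisj h (by rw [hW₂]; simp)
  · exact ((Walk.cons_isPath_iff _ _).1 hdrop).2 (W₂.fst_mem_support_of_mem_edges h)

lemma Walk.reachable_induce_of_support_subset {X Y : Set V} {a b : X}
    (W : (G.induce X).Walk a b) (h : ∀ z ∈ W.support, (z : V) ∈ Y) :
    (G.induce Y).Reachable ⟨a, h a W.start_mem_support⟩ ⟨b, h b W.end_mem_support⟩ := by
  induction W with
  | nil => exact .rfl
  | cons hadj W ih =>
    refine Adj.reachable ?_ |>.trans (ih fun z hz => h z (by simp [hz]))
    simpa using hadj

end SimpleGraph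

lemma Finset.eq_of_mem_of_notMem_of_erase_subset {α : Type*} [DecidableEq α]
    {s t : Finset α} {a b : α} (ha : a ∈ s) (hat : a ∉ t) (hst : s.erase b ⊆ t) : a = b :=
  of_not_not fun hab => hat (hst (Finset.mem_erase.2 ⟨hab, ha⟩))

lemma Sbtw.of_mem_openSegment {V : Type*} [AddCommGroup V] [Module ℝ V] {u p v : V}
    (h : p ∈ openSegment ℝ u v) (huv : u ≠ v) : Sbtw ℝ u p v :=
  ⟨mem_segment_iff_wbtw.1 (openSegment_subset_segment ℝ u v h),
    fun hpu => huv (left_mem_openSegment_iff.1 (hpu ▸ h)),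
    fun hpv => huv (right_mem_openSegment_iff.1 (hpv ▸ h))⟩

lemma edgeLen_mk (x y : Pt) : edgeLen s(x, y) = dist x y := rfl

lemma edgeLen_nonneg (e : Sym2 Pt) : 0 ≤ edgeLen e :=
  Sym2.ind (fun x y => (edgeLen_mk x y).symm ▸ dist_nonneg) e

lemma edgeLen_pos {e : Sym2 Pt} (he : ¬ e.IsDiag) : 0 < edgeLen e := by
  induction e using Sym2.ind with
  | _ x y => exact dist_pos.2 (Sym2.mk_isDiag_iff.not.1 he)

lemma weight_erase {E : Finset (Sym2 Pt)} {e : Sym2 Pt} (he : e ∈ E) :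
    weight (E.erase e) = weight E - edgeLen e :=
  Finset.sum_erase_eq_sub he

lemma weight_erase_lt {E : Finset (Sym2 Pt)} {e : Sym2 Pt} (he : e ∈ E) (hd : ¬ e.IsDiag) :
    weight (E.erase e) < weight E := by
  linarith [weight_erase he, edgeLen_pos hd]

lemma weight_insert_le (E : Finset (Sym2 Pt)) (e : Sym2 Pt) :
    weight (insert e E) ≤ edgeLen e + weight E := by
  by_cases h : e ∈ E
  · rw [Finset.insert_eq_self.2 h]
    linarith [edgeLen_nonneg e]
  · rw [weight, Finset.sum_insert h, weight]

lemma weight_insert_erase_le {E : Finset (Sym2 Pt)} {u v p : Pt} (he : s(u, v) ∈ E) :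
    weight (insert s(u, p) (E.erase s(u, v))) ≤ weight E - dist u v + dist u p := by
  linarith [weight_insert_le (E.erase s(u, v)) s(u, p), weight_erase he, edgeLen_mk u p,
    edgeLen_mk u v]

lemma weight_subdivide_le {E : Finset (Sym2 Pt)} {u v p : Pt} (he : s(u, v) ∈ E)
    (hp : Wbtw ℝ u p v) :
    weight (insert s(u, p) (insert s(p, v) (E.erase s(u, v)))) ≤ weight E := by
  linarith [weight_insert_le (insert s(p, v) (E.erase s(u, v))) s(u, p),
    weight_insert_le (E.erase s(u, v)) s(p, v), weight_erase he, hp.dist_add_dist,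
    edgeLen_mk u p, edgeLen_mk p v, edgeLen_mk u v]

lemma graphOf_induce_mono {E F : Finset (Sym2 Pt)} (h : E ⊆ F) (X : Set Pt) :
    (graphOf E).induce X ≤ (graphOf F).induce X :=
  fun _ _ hab => ⟨hab.1, h hab.2⟩

lemma deleteEdges_induce_graphOf_le (E : Finset (Sym2 Pt)) {X : Set Pt} (a b : X) :
    ((graphOf E).induce X).deleteEdges {s(a, b)} ≤
      (graphOf (E.erase s((a : Pt), (b : Pt)))).induce X := by
  intro x y hxy
  obtain ⟨⟨hne, hmem⟩, hxy⟩ := SimpleGraph.deleteEdges_adj.1 hxy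
  refine ⟨hne, Finset.mem_erase.2 ⟨fun h => hxy ?_, hmem⟩⟩
  simpa [Sym2.eq_iff, Subtype.ext_iff] using h

lemma connected_induce_graphOf_of_reachable {E F : Finset (Sym2 Pt)} {X : Set Pt}
    (hE : ((graphOf E).induce X).Connected)
    (h : ∀ a b : X, s((a : Pt), (b : Pt)) ∈ E → s((a : Pt), (b : Pt)) ∉ F →
      ((graphOf F).induce X).Reachable a b) :
    ((graphOf F).induce X).Connected :=
  hE.of_forall_adj_reachable fun a b hab =>
    if hF : s((a : Pt), (b : Pt)) ∈ F then SimpleGraph.Adj.reachable ⟨hab.1, hF⟩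
    else h a b hab.2 hF

lemma reachable_induce_graphOf_of_eq {F : Finset (Sym2 Pt)} {X : Set Pt} {u v : Pt} {a b : X}
    (hab : s((a : Pt), (b : Pt)) = s(u, v))
    (h : ∀ (hu : u ∈ X) (hv : v ∈ X), ((graphOf F).induce X).Reachable ⟨u, hu⟩ ⟨v, hv⟩) :
    ((graphOf F).induce X).Reachable a b := by
  rcases Sym2.eq_iff.1 hab with ⟨rfl, rfl⟩ | ⟨rfl, rfl⟩
  exacts [h a.2 b.2, (h b.2 a.2).symm]

lemma reachable_induce_graphOf_of_mem_of_mem {F : Finset (Sym2 Pt)} {X : Set Pt} {u v p : Pt}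
    (hu : u ∈ X) (hv : v ∈ X) (hp : p ∈ X) (hpu : p ≠ u) (hpv : p ≠ v)
    (hupF : s(u, p) ∈ F) (hpvF : s(p, v) ∈ F) :
    ((graphOf F).induce X).Reachable ⟨u, hu⟩ ⟨v, hv⟩ := by
  have hup : ((graphOf F).induce X).Adj ⟨u, hu⟩ ⟨p, hp⟩ := ⟨hpu.symm, hupF⟩
  have hpv : ((graphOf F).induce X).Adj ⟨p, hp⟩ ⟨v, hv⟩ := ⟨hpv, hpvF⟩
  exact hup.reachable.trans hpv.reachable

lemma connected_induce_insert_erase {E : Finset (Sym2 Pt)} {X : Set Pt} {u v p : Pt}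
    (hE : ((graphOf E).induce X).Connected) (hp : p ∈ X) (hpu : p ≠ u)
    (hreach : ∀ (_ : u ∈ X) (hv : v ∈ X),
      ((graphOf (E.erase s(u, v))).induce X).Reachable ⟨p, hp⟩ ⟨v, hv⟩) :
    ((graphOf (insert s(u, p) (E.erase s(u, v)))).induce X).Connected := by
  refine connected_induce_graphOf_of_reachable hE fun a b haE haF =>
    reachable_induce_graphOf_of_eq
      (Finset.eq_of_mem_of_notMem_of_erase_subset haE haF (Finset.subset_insert _ _))
      fun hu hv => ?_
  have hup : ((graphOf (insert s(u, p) (E.erase s(u, v)))).induce X).Adj ⟨u, hu⟩ ⟨p, hp⟩ :=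
    ⟨hpu.symm, Finset.mem_insert_self _ _⟩
  exact hup.reachable.trans
    ((hreach hu hv).mono (graphOf_induce_mono (Finset.subset_insert _ _) X))

lemma connected_induce_subdivide {E : Finset (Sym2 Pt)} {X : Set Pt} {u v p : Pt}
    (hE : ((graphOf E).induce X).Connected) (hp : p ∈ X) (hpu : p ≠ u) (hpv : p ≠ v) :
    ((graphOf (insert s(u, p) (insert s(p, v) (E.erase s(u, v))))).induce X).Connected :=
  connected_induce_graphOf_of_reachable hE fun _ _ haE haF =>
    reachable_induce_graphOf_of_eq
      (Finset.eq_of_mem_of_notMem_of_erase_subset haE haF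
        ((Finset.subset_insert _ _).trans (Finset.subset_insert _ _)))
      fun hu hv => reachable_induce_graphOf_of_mem_of_mem hu hv hp hpu hpv
        (Finset.mem_insert_self _ _) (Finset.mem_insert_of_mem (Finset.mem_insert_self _ _))

/-- `IsRBP R B P` is `ConnectsBoth (R ∪ B ∪ P) ↑(R ∪ P) ↑(B ∪ P)`. -/
def ConnectsBoth (Z : Finset Pt) (X Y : Set Pt) (E : Finset (Sym2 Pt)) : Prop :=
  (∀ e ∈ E, ¬ e.IsDiag) ∧
  (∀ e ∈ E, ∀ x ∈ e, x ∈ Z) ∧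
  ((graphOf E).induce X).Connected ∧
  ((graphOf E).induce Y).Connected

namespace ConnectsBoth

variable {Z : Finset Pt} {X Y : Set Pt} {E : Finset (Sym2 Pt)} {u v p : Pt}

lemma symm (h : ConnectsBoth Z X Y E) : ConnectsBoth Z Y X E :=
  ⟨h.1, h.2.1, h.2.2.2, h.2.2.1⟩

lemma ne_of_mem (h : ConnectsBoth Z X Y E) (he : s(u, v) ∈ E) : u ≠ v :=
  Sym2.mk_isDiag_iff.not.1 (h.1 _ he)

lemma left_mem (h : ConnectsBoth Z X Y E) (he : s(u, v) ∈ E) : u ∈ Z :=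
  h.2.1 _ he u (Sym2.mem_mk_left u v)

lemma right_mem (h : ConnectsBoth Z X Y E) (he : s(u, v) ∈ E) : v ∈ Z :=
  h.2.1 _ he v (Sym2.mem_mk_right u v)

lemma of_subset_union (h : ConnectsBoth Z X Y E) {N F : Finset (Sym2 Pt)}
    (hN : ∀ e ∈ N, ¬ e.IsDiag ∧ ∀ x ∈ e, x ∈ Z) (hF : F ⊆ N ∪ E)
    (hX : ((graphOf F).induce X).Connected) (hY : ((graphOf F).induce Y).Connected) :
    ConnectsBoth Z X Y F := by
  refine ⟨fun e he => ?_, fun e he => ?_, hX, hY⟩ <;>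
    rcases Finset.mem_union.1 (hF he) with heN | heE
  exacts [(hN e heN).1, h.1 e heE, (hN e heN).2, h.2.1 e heE]

lemma erase (h : ConnectsBoth Z X Y E)
    (hX : ∀ (hu : u ∈ X) (hv : v ∈ X),
      ((graphOf (E.erase s(u, v))).induce X).Reachable ⟨u, hu⟩ ⟨v, hv⟩)
    (hY : ∀ (hu : u ∈ Y) (hv : v ∈ Y),
      ((graphOf (E.erase s(u, v))).induce Y).Reachable ⟨u, hu⟩ ⟨v, hv⟩) :
    ConnectsBoth Z X Y (E.erase s(u, v)) :=
  ⟨fun e he => h.1 e (Finset.mem_of_mem_erase he),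
    fun e he => h.2.1 e (Finset.mem_of_mem_erase he),
    connected_induce_graphOf_of_reachable h.2.2.1 fun _ _ haE haF =>
      reachable_induce_graphOf_of_eq
        (Finset.eq_of_mem_of_notMem_of_erase_subset haE haF subset_rfl) hX,
    connected_induce_graphOf_of_reachable h.2.2.2 fun _ _ haE haF =>
      reachable_induce_graphOf_of_eq
        (Finset.eq_of_mem_of_notMem_of_erase_subset haE haF subset_rfl) hY⟩

lemma shortcut (h : ConnectsBoth Z X Y E) (he : s(u, v) ∈ E) (hpZ : p ∈ Z) (hpu : p ≠ u)
    (hpX : p ∈ X) (hpY : p ∈ Y)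
    (hX : ∀ (_ : u ∈ X) (hv : v ∈ X),
      ((graphOf (E.erase s(u, v))).induce X).Reachable ⟨p, hpX⟩ ⟨v, hv⟩)
    (hY : ∀ (_ : u ∈ Y) (hv : v ∈ Y),
      ((graphOf (E.erase s(u, v))).induce Y).Reachable ⟨p, hpY⟩ ⟨v, hv⟩) :
    ConnectsBoth Z X Y (insert s(u, p) (E.erase s(u, v))) :=
  h.of_subset_union (N := {s(u, p)}) (by simp [hpu.symm, h.left_mem he, hpZ])
    (Finset.insert_subset_insert _ (Finset.erase_subset _ _))
    (connected_induce_insert_erase h.2.2.1 hpX hpu hX)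
    (connected_induce_insert_erase h.2.2.2 hpY hpu hY)

lemma subdivide (h : ConnectsBoth Z X Y E) (he : s(u, v) ∈ E) (hpZ : p ∈ Z) (hpu : p ≠ u)
    (hpv : p ≠ v) (hpX : p ∈ X) (hpY : p ∈ Y) :
    ConnectsBoth Z X Y (insert s(u, p) (insert s(p, v) (E.erase s(u, v)))) :=
  h.of_subset_union (N := {s(u, p), s(p, v)})
    (by simp [hpu.symm, hpv, h.left_mem he, h.right_mem he, hpZ])
    (fun e he => by
      simp only [Finset.mem_insert, Finset.mem_union, Finset.mem_singleton,
        Finset.mem_erase] at he ⊢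
      tauto)
    (connected_induce_subdivide h.2.2.1 hpX hpu hpv)
    (connected_induce_subdivide h.2.2.2 hpY hpu hpv)

lemma exists_lt_of_shortcut (h : ConnectsBoth Z X Y E) (he : s(u, v) ∈ E)
    (hb : Sbtw ℝ u p v) (hpZ : p ∈ Z) (hpX : p ∈ X) (hpY : p ∈ Y)
    (hX : ∀ (_ : u ∈ X) (hv : v ∈ X),
      ((graphOf (E.erase s(u, v))).induce X).Reachable ⟨p, hpX⟩ ⟨v, hv⟩)
    (hY : ∀ (_ : u ∈ Y) (hv : v ∈ Y),
      ((graphOf (E.erase s(u, v))).induce Y).Reachable ⟨p, hpY⟩ ⟨v, hv⟩) :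
    ∃ F, ConnectsBoth Z X Y F ∧ weight F < weight E :=
  ⟨_, h.shortcut he hpZ hb.ne_left hpX hpY hX hY, by
    linarith [weight_insert_erase_le (p := p) he, hb.wbtw.dist_add_dist, dist_pos.2 hb.ne_right]⟩

lemma exists_lt_of_subdivide (h : ConnectsBoth Z X Y E) (he : s(u, v) ∈ E)
    (hb : Sbtw ℝ u p v) (hpZ : p ∈ Z) (hpX : p ∈ X) (hpY : p ∈ Y) (hvX : v ∈ X) (hvY : v ∈ Y)
    (hX : ((graphOf (E.erase s(u, v))).induce X).Reachable ⟨p, hpX⟩ ⟨v, hvX⟩)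
    (hY : ¬ ((graphOf (E.erase s(u, v))).induce Y).Reachable ⟨p, hpY⟩ ⟨v, hvY⟩) :
    ∃ F, ConnectsBoth Z X Y F ∧ weight F < weight E := by
  set E' := insert s(u, p) (insert s(p, v) (E.erase s(u, v)))
  obtain ⟨W, hW⟩ := hX.exists_isPath
  -- `ww'` lies on the cycle `p ⋯ w w' ⋯ v p` of the `X`-graph and, as `w ∉ Y`, not in the `Y`-graph
  obtain ⟨w, hwW, hwY⟩ : ∃ w ∈ W.support, (w : Pt) ∉ Y := by
    by_contra! hWY
    exact hY (W.reachable_induce_of_support_subset hWY)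
  obtain ⟨w', hww', hpw, hw'v⟩ :=
    hW.exists_adj_reachable_deleteEdges hwW fun hwv => hwY (hwv ▸ hvY)
  have hmono : ((graphOf (E.erase s(u, v))).induce X).deleteEdges {s(w, w')} ≤
      (graphOf (E'.erase s((w : Pt), w'))).induce X :=
    (deleteEdges_induce_graphOf_le _ w w').trans (graphOf_induce_mono (Finset.erase_subset_erase _
      ((Finset.subset_insert _ _).trans (Finset.subset_insert _ _))) X)
  have hpv : ((graphOf (E'.erase s((w : Pt), w'))).induce X).Adj ⟨p, hpX⟩ ⟨v, hvX⟩ := by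
    refine ⟨hb.ne_right, Finset.mem_erase.2 ⟨fun heq => hwY ?_,
      Finset.mem_insert_of_mem (Finset.mem_insert_self _ _)⟩⟩
    rcases Sym2.eq_iff.1 heq with ⟨hpw, -⟩ | ⟨-, hvw⟩
    exacts [hpw ▸ hpY, hvw ▸ hvY]
  have hfE' : s((w : Pt), w') ∈ E' :=
    Finset.mem_insert_of_mem (Finset.mem_insert_of_mem hww'.2)
  refine ⟨E'.erase s((w : Pt), w'), ?_, ?_⟩
  · exact (h.subdivide he hpZ hb.ne_left hb.ne_right hpX hpY).erase
      (fun _ _ => ((hpw.mono hmono).symm.trans hpv.reachable).trans (hw'v.mono hmono).symm)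
      (fun hw _ => absurd hw hwY)
  · exact (weight_erase_lt hfE' (Sym2.mk_isDiag_iff.not.2 hww'.1)).trans_le
      (weight_subdivide_le he hb.wbtw)

lemma exists_lt_of_reachable (h : ConnectsBoth Z X Y E) (he : s(u, v) ∈ E)
    (hb : Sbtw ℝ u p v) (hpZ : p ∈ Z) (hpX : p ∈ X) (hpY : p ∈ Y) (hvX : v ∈ X)
    (hX : ((graphOf (E.erase s(u, v))).induce X).Reachable ⟨p, hpX⟩ ⟨v, hvX⟩) :
    ∃ F, ConnectsBoth Z X Y F ∧ weight F < weight E := by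
  by_cases hY : ∀ (_ : u ∈ Y) (hv : v ∈ Y),
      ((graphOf (E.erase s(u, v))).induce Y).Reachable ⟨p, hpY⟩ ⟨v, hv⟩
  · exact h.exists_lt_of_shortcut he hb hpZ hpX hpY (fun _ _ => hX) hY
  · push Not at hY
    obtain ⟨-, hvY, hY⟩ := hY
    exact h.exists_lt_of_subdivide he hb hpZ hpX hpY hvX hvY hX hY

lemma exists_lt_of_mem_of_mem (h : ConnectsBoth Z X Y E) (he : s(u, v) ∈ E)
    (hb : Sbtw ℝ u p v) (hpZ : p ∈ Z) (hpX : p ∈ X) (hpY : p ∈ Y) (huX : u ∈ X) (hvX : v ∈ X) :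
    ∃ F, ConnectsBoth Z X Y F ∧ weight F < weight E := by
  have hmono := deleteEdges_induce_graphOf_le E (⟨u, huX⟩ : X) ⟨v, hvX⟩
  rcases (h.2.2.1.preconnected ⟨p, hpX⟩ ⟨u, huX⟩).reachable_deleteEdges_or ⟨v, hvX⟩
    with hu | hv
  · have hu := hu.mono hmono
    rw [Sym2.eq_swap] at he hu
    exact h.exists_lt_of_reachable he hb.symm hpZ hpX hpY huX hu
  · exact h.exists_lt_of_reachable he hb hpZ hpX hpY hvX (hv.mono hmono)

lemma exists_lt_of_sbtw (h : ConnectsBoth Z X Y E) (he : s(u, v) ∈ E)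
    (hb : Sbtw ℝ u p v) (hpZ : p ∈ Z) (hpX : p ∈ X) (hpY : p ∈ Y) :
    ∃ F, ConnectsBoth Z X Y F ∧ weight F < weight E := by
  by_cases hX : u ∈ X ∧ v ∈ X
  · exact h.exists_lt_of_mem_of_mem he hb hpZ hpX hpY hX.1 hX.2
  by_cases hY : u ∈ Y ∧ v ∈ Y
  · obtain ⟨F, hF, hlt⟩ := h.symm.exists_lt_of_mem_of_mem he hb hpZ hpY hpX hY.1 hY.2
    exact ⟨F, hF.symm, hlt⟩
  exact ⟨_, h.erase (fun hu hv => absurd ⟨hu, hv⟩ hX) (fun hu hv => absurd ⟨hu, hv⟩ hY),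
    weight_erase_lt he (h.1 _ he)⟩

end ConnectsBoth

theorem line_minRBP_no_purple_inside_edge_general (R B P : Finset Pt)
    (E : Finset (Sym2 Pt)) (hE : IsMinRBP R B P E) :
    ∀ u v : Pt, s(u, v) ∈ E → ∀ p ∈ P, p ∉ openSegment ℝ u v := by
  intro u v he p hp hseg
  have hRBP : ConnectsBoth (R ∪ B ∪ P) ↑(R ∪ P) ↑(B ∪ P) E := hE.1
  obtain ⟨F, hF, hlt⟩ := hRBP.exists_lt_of_sbtw he
    (Sbtw.of_mem_openSegment hseg (hRBP.ne_of_mem he)) (by simp [hp]) (by simp [hp])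
    (by simp [hp])
  exact (hE.2 F hF).not_gt hlt

/-- if all points lie on a common line, then for every edge `uv` of a
minimum RBP spanning graph, no purple point lies in the open segment between `u`
and `v`. -/
theorem line_minRBP_no_purple_inside_edge (R B P : Finset Pt)
    (hRB : Disjoint R B) (hRP : Disjoint R P) (hBP : Disjoint B P)
    (hline : Collinear ℝ (↑(R ∪ B ∪ P) : Set Pt))
    (E : Finset (Sym2 Pt)) (hE : IsMinRBP R B P E) :
    ∀ u v : Pt, s(u, v) ∈ E → ∀ p ∈ P, p ∉ openSegment ℝ u v :=
  line_minRBP_no_purple_inside_edge_general R B P E hE
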